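/- For every natural number k, d_k = 2^{2k+1} − 1, where d_k is the maximum over all vertices v of P^k of the distance from v to the set W_k of the three 2-valent vertices of P^k. -/

import Mathlib

open SimpleGraph

/-- Degree of a vertex, via the cardinality of its neighbor set. -/
noncomputable def hdeg {V : Type*} (G : SimpleGraph V) (v : V) : ℕ :=
  {w | G.Adj v w}.ncard

/-- A cubic graph: every vertex has degree 3. -/
def IsCubic {V : Type*} (G : SimpleGraph V) : Prop := ∀ v, hdeg G v = 3

/-- A 2-connected graph: at least 3 vertices and deleting any vertex leaves it connected. -/
def TwoConnected {V : Type*} (G : SimpleGraph V) : Prop :=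
  3 ≤ Nat.card V ∧ ∀ v : V, (G.induce {v}ᶜ).Connected

/-- A 3-connected graph: at least 4 vertices and deleting any two vertices leaves it connected. -/
def ThreeConnected {V : Type*} (G : SimpleGraph V) : Prop :=
  4 ≤ Nat.card V ∧ ∀ v w : V, v ≠ w → (G.induce ({v, w} : Set V)ᶜ).Connected

/-- Edge list of the Petersen graph on `Fin 10` (vertex 9 has neighbors 4, 6, 7). -/
def petEdges : List (Fin 10 × Fin 10) :=
  [(0,1),(1,2),(2,3),(3,4),(4,0),(0,5),(1,6),(2,7),(3,8),(4,9),(5,7),(7,9),(9,6),(6,8),(8,5)]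

/-- The Petersen graph `P₁₀`. -/
def Pet : SimpleGraph (Fin 10) := SimpleGraph.fromRel (fun a b => (a, b) ∈ petEdges)

/-- Edge list of `P = P₁₀ - z` on `Fin 9` (where `z` was vertex 9);
its three 2-valent vertices are 4, 6, 7. -/
def pEdges : List (Fin 9 × Fin 9) :=
  [(0,1),(1,2),(2,3),(3,4),(4,0),(0,5),(1,6),(2,7),(3,8),(5,7),(6,8),(8,5)]

/-- The graph `P = P₁₀ - z`, the Petersen graph minus one vertex. -/
def Pgr : SimpleGraph (Fin 9) := SimpleGraph.fromRel (fun a b => (a, b) ∈ pEdges)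

/-- The three 2-valent vertices of `P` (as targets of the port assignment). -/
def portIdx : ℕ → Fin 9
  | 0 => 4
  | 1 => 6
  | _ => 7

/-- Port assignment: to which 2-valent vertex of the copy of `P` replacing `u` the
neighbor `v` of `u` gets attached (neighbors are ordered by the injective encoding `enc`). -/
noncomputable def port {V : Type*} (G : SimpleGraph V) (enc : V → ℕ) (u v : V) : Fin 9 :=
  portIdx (Nat.card {w : V | G.Adj u w ∧ enc w < enc v})

/-- Simultaneous `P`-inflation at every vertex of `G`. -/
noncomputable def inflate {V : Type*} (G : SimpleGraph V) (enc : V → ℕ) :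
    SimpleGraph (V × Fin 9) where
  Adj a b :=
    (a.1 = b.1 ∧ Pgr.Adj a.2 b.2) ∨
    (G.Adj a.1 b.1 ∧ a.2 = port G enc a.1 b.1 ∧ b.2 = port G enc b.1 a.1)
  symm := ⟨by
    rintro a b (⟨h1, h2⟩ | ⟨h1, h2, h3⟩)
    · exact Or.inl ⟨h1.symm, h2.symm⟩
    · exact Or.inr ⟨h1.symm, h3, h2⟩⟩
  loopless := ⟨by
    rintro a (⟨-, h⟩ | ⟨h, -, -⟩)
    · exact Pgr.loopless.irrefl _ h
    · exact G.loopless.irrefl _ h⟩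

/-- A graph bundled with an injective-style encoding of its vertices into `ℕ`. -/
structure GE where
  V : Type
  G : SimpleGraph V
  enc : V → ℕ

/-- One round of simultaneous `P`-inflation. -/
noncomputable def step (A : GE) : GE :=
  ⟨A.V × Fin 9, inflate A.G A.enc, fun p => Nat.pair (A.enc p.1) p.2.val⟩

/-- The iterated Petersen graph `P₁₀ᵏ`. -/
noncomputable def ItP10 : ℕ → GE
  | 0 => ⟨Fin 10, Pet, Fin.val⟩
  | k + 1 => step (ItP10 k)

/-- The iterated graph `Pᵏ` (starting from `P = P₁₀ - z`). -/
noncomputable def ItP : ℕ → GE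
  | 0 => ⟨Fin 9, Pgr, Fin.val⟩
  | k + 1 => step (ItP k)

/-- The canonical copy of `P^{k-1}` in `P₁₀ᵏ` containing a given vertex,
recorded by the corresponding vertex of `P₁₀`. -/
noncomputable def baseOf : (k : ℕ) → (ItP10 k).V → Fin 10
  | 0 => id
  | k + 1 => fun p => baseOf k p.1

/-- The parameter `l(G)`: minimum over circuits `C` of the maximum over vertices `v`
of the distance `d(C, v)`. -/
noncomputable def ell {V : Type*} (G : SimpleGraph V) : ℕ :=
  sInf { n | ∃ (v : V) (w : G.Walk v v), w.IsCycle ∧ ∀ u : V, ∃ x ∈ w.support, G.dist x u ≤ n }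

/-- `M` is a matching of `G`: a set of edges of `G`, pairwise not sharing a vertex. -/
def IsMatchingSet {V : Type*} (G : SimpleGraph V) (M : Set (Sym2 V)) : Prop :=
  M ⊆ G.edgeSet ∧ ∀ e ∈ M, ∀ f ∈ M, e ≠ f → ∀ v : V, ¬(v ∈ e ∧ v ∈ f)

/-- Every connected component of `H` has an even number of vertices. -/
def EvenComponents {V : Type*} (H : SimpleGraph V) : Prop :=
  ∀ c : H.ConnectedComponent, Even c.supp.ncard

/-- An `f`-matching: a matching `M` such that every component of `G - M` is
2-connected and has an even number of vertices. -/
def IsFMatching {V : Type*} (G : SimpleGraph V) (M : Set (Sym2 V)) : Prop :=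
  IsMatchingSet G M ∧
    ∀ c : (G.deleteEdges M).ConnectedComponent,
      TwoConnected ((G.deleteEdges M).induce c.supp) ∧ Even c.supp.ncard

/-- A minimal edge cut of `G`: deleting it disconnects `G`, but deleting any
proper subset does not. -/
def IsMinEdgeCut {V : Type*} (G : SimpleGraph V) (E : Set (Sym2 V)) : Prop :=
  E ⊆ G.edgeSet ∧ ¬(G.deleteEdges E).Connected ∧
    ∀ F : Set (Sym2 V), F ⊂ E → (G.deleteEdges F).Connected

/-- `H` is a subdivision of `F`: the vertices of `F` embed into `H` and each edge of `F`
corresponds to a path in `H`, the paths being internally disjoint and covering `H`. -/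
def IsSubdivisionOf {W U : Type*} (H : SimpleGraph W) (F : SimpleGraph U) : Prop :=
  ∃ f : U ↪ W, ∃ p : ∀ u v : U, F.Adj u v → H.Walk (f u) (f v),
    (∀ u v h, (p u v h).IsPath) ∧
    (∀ u v h, ∀ w ∈ (p u v h).support, w ∈ Set.range f → w = f u ∨ w = f v) ∧
    (∀ e : Sym2 W, e ∈ H.edgeSet ↔ ∃ u v h, e ∈ (p u v h).edges) ∧
    (∀ w : W, w ∈ Set.range f ∨ ∃ u v h, w ∈ (p u v h).support) ∧
    (∀ u v h u' v' h', ∀ w : W,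
      w ∈ (p u v h).support → w ∈ (p u' v' h').support →
      w ∈ Set.range f ∨ (u = u' ∧ v = v') ∨ (u = v' ∧ v = u'))

/-- Each component of `F` is an even circuit or a 2-connected cubic graph. -/
def GoodFrameComponents {U : Type*} (F : SimpleGraph U) : Prop :=
  ∀ c : F.ConnectedComponent,
    ((F.induce c.supp).Connected ∧ (∀ v, hdeg (F.induce c.supp) v = 2) ∧ Even c.supp.ncard) ∨
    (TwoConnected (F.induce c.supp) ∧ IsCubic (F.induce c.supp))

/-- `F` is a frame of `G`. -/
def IsFrame {U V : Type*} (F : SimpleGraph U) (G : SimpleGraph V) : Prop :=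
  GoodFrameComponents F ∧
    ∃ H : SimpleGraph V, H ≤ G ∧ IsSubdivisionOf H F ∧ EvenComponents H

/-- A proper 3-edge-coloring of `G`. -/
def ProperEdgeColoring {V : Type*} (G : SimpleGraph V) (f : Sym2 V → Fin 3) : Prop :=
  ∀ u v w : V, G.Adj u v → G.Adj u w → v ≠ w → f s(u, v) ≠ f s(u, w)

/-- The spanning subgraph of edges whose color is different from `c`
(i.e. the union of the other two color classes). -/
def twoClassSub {V : Type*} (G : SimpleGraph V) (f : Sym2 V → Fin 3) (c : Fin 3) :
    SimpleGraph V where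
  Adj u v := G.Adj u v ∧ f s(u, v) ≠ c
  symm := ⟨by
    rintro u v ⟨h1, h2⟩
    exact ⟨h1.symm, by rwa [Sym2.eq_swap]⟩⟩
  loopless := ⟨fun v h => G.loopless.irrefl v h.1⟩

/-- A Kotzig graph: a cubic graph with a proper 3-edge-coloring in which any two
color classes form a hamiltonian circuit. -/
def IsKotzig {V : Type*} (G : SimpleGraph V) : Prop :=
  IsCubic G ∧ ∃ f : Sym2 V → Fin 3, ProperEdgeColoring G f ∧
    ∀ c : Fin 3, (twoClassSub G f c).Connected ∧ ∀ v, hdeg (twoClassSub G f c) v = 2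

/-- The family `Fam` is an even subdivision-factor of `G`. -/
def IsEvenSubdivFactor {ι : Type*} (Fam : ι → Σ n : ℕ, SimpleGraph (Fin n))
    {V : Type*} (G : SimpleGraph V) : Prop :=
  ∃ H : SimpleGraph V, H ≤ G ∧ ∀ c : H.ConnectedComponent,
    Even c.supp.ncard ∧ ∃ i, IsSubdivisionOf (H.induce c.supp) (Fam i).2

/-!
The three 2-valent vertices `4, 6, 7` of `P` (its ports) are pairwise at distance 3, and every
vertex of `P` is within distance 3 of each port. In `inflate G enc` the 2-valent vertices are the
`(w, 7)` with `w` 2-valent in `G`, and following a shortest path of `G` costs at most three edges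
inside each copy of `P` and one between consecutive copies: the radius `d` becomes at most
`4 d + 3`.

For the lower bound, the potential of `(u, a)` is `4 · dist_G(u, w)` plus the distance in `P` from
`a` to the ports of `u` facing neighbours closer to `w` (to `7` if `u = w`). It drops by at most
one along every edge and vanishes at `(w, 7)`, so it bounds the distance to `(w, 7)` from below.
As ports are 3 apart, the port of `u` facing a neighbour `y` no closer to `w` has potential
`4 · dist_G(u, w) + 3`. So if `uy` is an edge with `u` at distance at least `d` from every
2-valent vertex, and `y` no closer than `u` to those at distance exactly `d`, then `(u, port u y)`
is at distance at least `4 d + 3` from every 2-valent vertex, and the edge from it to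
`(y, port y u)` has the same property in the inflated graph. Hence `d ↦ 4 d + 3` exactly, from
`d₀ = 1`, which gives `2 ^ (2k + 1) - 1`.
-/

namespace SimpleGraph

variable {V : Type*} {G : SimpleGraph V} {u v w : V} {S : Set V}

/-- The distance from `v` to the nearest vertex of `S` (junk value `0` when `S` is empty). -/
noncomputable def infDist (G : SimpleGraph V) (v : V) (S : Set V) : ℕ :=
  sInf (G.dist v '' S)

lemma infDist_le (hw : w ∈ S) : G.infDist v S ≤ G.dist v w :=
  Nat.sInf_le ⟨w, hw, rfl⟩

lemma le_infDist {n : ℕ} (hS : S.Nonempty) (h : ∀ w ∈ S, n ≤ G.dist v w) :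
    n ≤ G.infDist v S :=
  le_csInf (hS.image _) (by rintro _ ⟨w, hw, rfl⟩; exact h w hw)

lemma exists_infDist_eq (hS : S.Nonempty) : ∃ w ∈ S, G.infDist v S = G.dist v w := by
  obtain ⟨w, hw, h⟩ := Nat.sInf_mem (hS.image (G.dist v))
  exact ⟨w, hw, h.symm⟩

lemma Adj.dist_le_dist_add_one (h : G.Adj u v) (w : V) : G.dist u w ≤ G.dist v w + 1 := by
  have := h.reachable.dist_triangle_left w
  rw [dist_eq_one_iff_adj.mpr h] at this
  omega

lemma Adj.infDist_le_infDist_add_one (h : G.Adj u v) (hS : S.Nonempty) :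
    G.infDist u S ≤ G.infDist v S + 1 := by
  obtain ⟨w, hw, hv⟩ := exists_infDist_eq (G := G) (v := v) hS
  exact (infDist_le hw).trans (hv ▸ h.dist_le_dist_add_one w)

lemma Reachable.le_add_dist {f : V → ℕ} (hf : ∀ ⦃p q⦄, G.Adj p q → f p ≤ f q + 1) {s t : V}
    (h : G.Reachable s t) : f s ≤ f t + G.dist s t := by
  obtain ⟨p, hp⟩ := h.exists_walk_length_eq_dist
  rw [← hp]
  clear hp h
  induction p with
  | nil => simp
  | cons hadj p ih =>
    have := hf hadj
    rw [Walk.length_cons]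
    omega

lemma sSup_range_infDist_eq {d : ℕ} (hnear : ∀ v, ∃ w ∈ S, G.dist v w ≤ d)
    (hfar : ∃ u, ∀ w ∈ S, d ≤ G.dist u w) : sSup (Set.range fun v => G.infDist v S) = d := by
  obtain ⟨u, hu⟩ := hfar
  have hle : ∀ v, G.infDist v S ≤ d := fun v => by
    obtain ⟨w, hw, hvw⟩ := hnear v
    exact (infDist_le hw).trans hvw
  have hS : S.Nonempty := let ⟨w, hw, _⟩ := hnear u; ⟨w, hw⟩
  refine le_antisymm (csSup_le ⟨_, u, rfl⟩ (Set.forall_mem_range.mpr hle)) ?_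
  exact le_csSup ⟨d, Set.forall_mem_range.mpr hle⟩ ⟨u, le_antisymm (hle u) (le_infDist hS hu)⟩

lemma Reachable.exists_adj_dist_lt (h : G.Reachable u w) (hne : u ≠ w) :
    ∃ y, G.Adj u y ∧ G.dist y w < G.dist u w := by
  obtain ⟨p, hp⟩ := h.exists_walk_length_eq_dist
  cases p with
  | nil => exact absurd rfl hne
  | cons hadj q =>
    have := dist_le q
    rw [Walk.length_cons] at hp
    exact ⟨_, hadj, by omega⟩

end SimpleGraph

instance : DecidableRel Pgr.Adj := fun a b =>
  decidable_of_iff (a ≠ b ∧ ((a, b) ∈ pEdges ∨ (b, a) ∈ pEdges)) (by rw [Pgr, fromRel_adj])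

/-- A decidable stand-in for `Pgr.dist a b ≤ n`, so that facts about distances in `P` can be
checked by `decide`. -/
def PgrReach : ℕ → Fin 9 → Fin 9 → Prop
  | 0, a, b => a = b
  | n + 1, a, b => a = b ∨ ∃ x, Pgr.Adj a x ∧ PgrReach n x b

instance : ∀ n a b, Decidable (PgrReach n a b)
  | 0, _, _ => inferInstanceAs (Decidable (_ = _))
  | n + 1, _, b =>
    have := fun x => instDecidablePgrReach n x b
    inferInstanceAs (Decidable (_ ∨ _))

lemma pgrReach_iff {n : ℕ} {a b : Fin 9} :
    PgrReach n a b ↔ ∃ p : Pgr.Walk a b, p.length ≤ n := by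
  induction n generalizing a with
  | zero =>
    refine ⟨fun h => h ▸ ⟨.nil, le_rfl⟩, fun ⟨p, hp⟩ => ?_⟩
    exact Walk.eq_of_length_eq_zero (Nat.le_zero.mp hp)
  | succ n ih =>
    refine ⟨?_, fun ⟨p, hp⟩ => ?_⟩
    · rintro (rfl | ⟨x, hax, hx⟩)
      · exact ⟨.nil, Nat.zero_le _⟩
      · obtain ⟨p, hp⟩ := ih.mp hx
        exact ⟨.cons hax p, by simpa using hp⟩
    · cases p with
      | nil => exact Or.inl rfl
      | cons hax p => exact Or.inr ⟨_, hax, ih.mpr ⟨p, by simpa using hp⟩⟩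

lemma pgr_connected : Pgr.Connected := by
  have h : ∀ a : Fin 9, PgrReach 3 a 0 := by decide
  refine (connected_iff_exists_forall_reachable Pgr).mpr ⟨0, fun a => ?_⟩
  obtain ⟨p, -⟩ := pgrReach_iff.mp (h a)
  exact p.reverse.reachable

lemma pgr_dist_le_iff {n : ℕ} {a b : Fin 9} : Pgr.dist a b ≤ n ↔ PgrReach n a b := by
  rw [pgrReach_iff]
  refine ⟨fun h => ?_, fun ⟨p, hp⟩ => (dist_le p).trans hp⟩
  obtain ⟨p, hp⟩ := (pgr_connected a b).exists_walk_length_eq_dist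
  exact ⟨p, hp ▸ h⟩

def ports : Set (Fin 9) := {4, 6, 7}

instance : DecidablePred (· ∈ ports) := fun a =>
  decidable_of_iff (a = 4 ∨ a = 6 ∨ a = 7) Iff.rfl

lemma hdeg_pgr (a : Fin 9) : hdeg Pgr a = if a ∈ ports then 2 else 3 := by
  have h : ∀ a : Fin 9, (Finset.univ.filter (Pgr.Adj a)).card = if a ∈ ports then 2 else 3 := by
    decide
  rw [← h, hdeg, ← Set.ncard_coe_finset]
  congr 1
  ext
  simp

lemma pgr_dist_le_three (a : Fin 9) {b : Fin 9} (hb : b ∈ ports) : Pgr.dist a b ≤ 3 := by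
  have h : ∀ a b : Fin 9, b ∈ ports → PgrReach 3 a b := by decide
  exact pgr_dist_le_iff.mpr (h a b hb)

lemma pgr_dist_eq_three {a b : Fin 9} (ha : a ∈ ports) (hb : b ∈ ports) (hab : a ≠ b) :
    Pgr.dist a b = 3 := by
  have h : ∀ a b : Fin 9, a ∈ ports → b ∈ ports → a ≠ b → ¬PgrReach 2 a b := by decide
  have := pgr_dist_le_iff.not.mpr (h a b ha hb hab)
  have := pgr_dist_le_three a hb
  omega

lemma exists_port_pgr_dist_le_one (a : Fin 9) : ∃ b ∈ ports, Pgr.dist a b ≤ 1 := by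
  have h : ∀ a : Fin 9, ∃ b ∈ ports, PgrReach 1 a b := by decide
  obtain ⟨b, hb, h⟩ := h a
  exact ⟨b, hb, pgr_dist_le_iff.mpr h⟩

lemma pgr_infDist_eq_three {S : Set (Fin 9)} (hS : S ⊆ ports) (hne : S.Nonempty) {a : Fin 9}
    (ha : a ∈ ports) (haS : a ∉ S) : Pgr.infDist a S = 3 := by
  have hdist : ∀ b ∈ S, Pgr.dist a b = 3 := fun b hb =>
    pgr_dist_eq_three ha (hS hb) (ne_of_mem_of_not_mem hb haS).symm
  obtain ⟨b, hb⟩ := hne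
  exact le_antisymm ((infDist_le hb).trans (hdist b hb).le)
    (le_infDist ⟨b, hb⟩ fun c hc => (hdist c hc).ge)

section Rank

variable {α β : Type*} [LinearOrder β] {s : Set α} {f : α → β}

lemma injOn_ncard_sep_lt (hs : s.Finite) (hf : s.InjOn f) :
    s.InjOn fun v => {w ∈ s | f w < f v}.ncard := by
  have hlt : ∀ ⦃v v'⦄, v ∈ s → f v < f v' →
      {w ∈ s | f w < f v}.ncard < {w ∈ s | f w < f v'}.ncard := fun v v' hv h =>
    Set.ncard_lt_ncard ⟨fun w hw => ⟨hw.1, hw.2.trans h⟩, fun hsub => (hsub ⟨hv, h⟩).2.false⟩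
      (hs.subset (Set.sep_subset _ _))
  intro v hv v' hv' h
  by_contra hne
  rcases lt_or_gt_of_ne (hf.ne hv hv' hne) with hvv' | hv'v
  · exact (hlt hv hvv').ne h
  · exact (hlt hv' hv'v).ne h.symm

lemma image_ncard_sep_lt_eq_Iio (hs : s.Finite) (hf : s.InjOn f) :
    (fun v => {w ∈ s | f w < f v}.ncard) '' s = Set.Iio s.ncard := by
  refine Set.eq_of_subset_of_ncard_le ?_ ?_ (Set.finite_Iio _)
  · rintro _ ⟨v, hv, rfl⟩
    exact Set.ncard_lt_ncard ⟨Set.sep_subset _ _, fun hsub => (hsub hv).2.false⟩ hs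
  · rw [Set.ncard_Iio_nat, (injOn_ncard_sep_lt hs hf).ncard_image]

end Rank

lemma portIdx_mem_ports (n : ℕ) : portIdx n ∈ ports := by
  rcases n with _ | _ | n <;> simp [portIdx, ports]

lemma portIdx_injOn : (Set.Iio 3).InjOn portIdx := by
  intro m hm n hn h
  simp only [Set.mem_Iio] at hm hn
  interval_cases m <;> interval_cases n <;> simp_all [portIdx]

lemma portIdx_image_Iio_two : portIdx '' Set.Iio 2 = {4, 6} := by
  rw [show Set.Iio 2 = {0, 1} by ext; simp; omega, Set.image_pair]
  rfl

lemma portIdx_image_Iio_three : portIdx '' Set.Iio 3 = ports := by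
  rw [show Set.Iio 3 = {0, 1, 2} by ext; simp; omega, Set.image_insert_eq, Set.image_pair]
  rfl

section Port

variable {V : Type*} {G : SimpleGraph V} {enc : V → ℕ} {u : V}

lemma port_eq_portIdx (u v : V) :
    port G enc u v = portIdx {w ∈ G.neighborSet u | enc w < enc v}.ncard := by
  rw [port, Nat.card_coe_set_eq]
  rfl

lemma port_mem_ports (u v : V) : port G enc u v ∈ ports := portIdx_mem_ports _

variable (hu : hdeg G u = 2 ∨ hdeg G u = 3)
include hu

lemma finite_neighborSet_of_hdeg : (G.neighborSet u).Finite := by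
  have h : (G.neighborSet u).ncard = hdeg G u := rfl
  exact Set.finite_of_ncard_ne_zero (by omega)

variable (hinj : Function.Injective enc)
include hinj

lemma port_image_neighborSet :
    port G enc u '' G.neighborSet u = portIdx '' Set.Iio (hdeg G u) := by
  rw [funext (port_eq_portIdx (G := G) (enc := enc) u), ← Set.image_image portIdx,
    image_ncard_sep_lt_eq_Iio (finite_neighborSet_of_hdeg hu) hinj.injOn]
  rfl

lemma port_injOn : (G.neighborSet u).InjOn (port G enc u) := by
  rw [funext (port_eq_portIdx (G := G) (enc := enc) u)]
  have hrank := image_ncard_sep_lt_eq_Iio (finite_neighborSet_of_hdeg hu)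
    (hinj.injOn (s := G.neighborSet u))
  refine portIdx_injOn.comp (injOn_ncard_sep_lt (finite_neighborSet_of_hdeg hu) hinj.injOn)
    fun v hv => ?_
  have h : _ ∈ Set.Iio (hdeg G u) := hrank ▸ Set.mem_image_of_mem _ hv
  simp only [Set.mem_Iio] at h ⊢
  omega

lemma mem_port_image_iff {a : Fin 9} :
    a ∈ port G enc u '' G.neighborSet u ↔ a ∈ ports ∧ (hdeg G u = 2 → a ≠ 7) := by
  rw [port_image_neighborSet hu hinj]
  rcases hu with h | h <;> rw [h]
  · rw [portIdx_image_Iio_two]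
    fin_cases a <;> simp [ports]
  · rw [portIdx_image_Iio_three]
    simp

end Port

section Inflate

variable {V : Type*} {G : SimpleGraph V} {enc : V → ℕ}

lemma neighborSet_inflate (u : V) (a : Fin 9) :
    (inflate G enc).neighborSet (u, a) = (u, ·) '' Pgr.neighborSet a ∪
      (fun y => (y, port G enc y u)) '' {y ∈ G.neighborSet u | port G enc u y = a} := by
  ext ⟨v, b⟩
  simp only [mem_neighborSet, inflate, Set.mem_union, Set.mem_image, Set.mem_ofPred_eq,
    Prod.mk.injEq]
  constructor
  · rintro (⟨rfl, hab⟩ | ⟨huv, rfl, rfl⟩)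
    · exact Or.inl ⟨b, hab, rfl, rfl⟩
    · exact Or.inr ⟨v, ⟨huv, rfl⟩, rfl, rfl⟩
  · rintro (⟨b, hab, rfl, rfl⟩ | ⟨v, ⟨huv, rfl⟩, rfl, rfl⟩)
    · exact Or.inl ⟨rfl, hab⟩
    · exact Or.inr ⟨huv, rfl, rfl⟩

variable (hinj : Function.Injective enc) {u : V} (hu : hdeg G u = 2 ∨ hdeg G u = 3)
include hinj hu

open Classical in
lemma hdeg_inflate_eq_add (a : Fin 9) :
    hdeg (inflate G enc) (u, a) =
      hdeg Pgr a + if a ∈ port G enc u '' G.neighborSet u then 1 else 0 := by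
  have hcross : {y ∈ G.neighborSet u | port G enc u y = a}.ncard =
      if a ∈ port G enc u '' G.neighborSet u then 1 else 0 := by
    split_ifs with ha
    · obtain ⟨y, hy, rfl⟩ := ha
      rw [Set.ncard_eq_one]
      refine ⟨y, Set.eq_singleton_iff_unique_mem.mpr ⟨⟨hy, rfl⟩, fun z hz => ?_⟩⟩
      exact port_injOn hu hinj hz.1 hy hz.2
    · have hempty : {y ∈ G.neighborSet u | port G enc u y = a} = ∅ :=
        Set.eq_empty_of_forall_notMem fun y hy => ha ⟨y, hy⟩
      rw [hempty, Set.ncard_empty]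
  have hdisj : Disjoint ((u, ·) '' Pgr.neighborSet a)
      ((fun y => (y, port G enc y u)) '' {y ∈ G.neighborSet u | port G enc u y = a}) := by
    rw [Set.disjoint_left]
    rintro _ ⟨b, -, rfl⟩ ⟨y, hy, hyu⟩
    obtain rfl : y = u := congrArg Prod.fst hyu
    exact G.loopless.irrefl _ hy.1
  change ((inflate G enc).neighborSet (u, a)).ncard = _
  rw [neighborSet_inflate, Set.ncard_union_eq hdisj (Set.toFinite _)
    (((finite_neighborSet_of_hdeg hu).subset (Set.sep_subset _ _)).image _),
    Set.ncard_image_of_injective _ (Prod.mk_right_injective u),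
    Set.ncard_image_of_injective _ fun y z h => congrArg Prod.fst h, hcross]
  rfl

lemma hdeg_inflate (a : Fin 9) :
    hdeg (inflate G enc) (u, a) = if hdeg G u = 2 ∧ a = 7 then 2 else 3 := by
  rw [hdeg_inflate_eq_add hinj hu, hdeg_pgr]
  by_cases ha : a ∈ ports
  · have := (mem_port_image_iff hu hinj (enc := enc) (a := a))
    by_cases h : hdeg G u = 2 ∧ a = 7 <;> simp_all
  · have : a ≠ 7 := by rintro rfl; exact ha (by simp [ports])
    simp [ha, this, mem_port_image_iff hu hinj]

end Inflate

section InflateWalk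

variable {V : Type*} {G : SimpleGraph V} {enc : V → ℕ}

lemma exists_walk_inflate_of_eq (u : V) (a : Fin 9) {b : Fin 9} (hb : b ∈ ports) :
    ∃ p : (inflate G enc).Walk (u, a) (u, b), p.length ≤ 3 := by
  obtain ⟨p, hp⟩ := pgrReach_iff.mp (pgr_dist_le_iff.mp (pgr_dist_le_three a hb))
  let copy : Pgr →g inflate G enc := ⟨fun a => (u, a), fun h => Or.inl ⟨rfl, h⟩⟩
  exact ⟨(p.map copy).copy rfl rfl, by simpa using hp⟩

lemma exists_walk_inflate {u w : V} (q : G.Walk u w) (a : Fin 9) {b : Fin 9} (hb : b ∈ ports) :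
    ∃ p : (inflate G enc).Walk (u, a) (w, b), p.length ≤ 4 * q.length + 3 := by
  induction q generalizing a with
  | nil => exact exists_walk_inflate_of_eq _ a hb
  | @cons x y z hxy q ih =>
    obtain ⟨p₁, hp₁⟩ :=
      exists_walk_inflate_of_eq (G := G) (enc := enc) x a (port_mem_ports x y)
    obtain ⟨p₂, hp₂⟩ := ih (port G enc y x)
    have hcross : (inflate G enc).Adj (x, port G enc x y) (y, port G enc y x) :=
      Or.inr ⟨hxy, rfl, rfl⟩
    refine ⟨p₁.append (.cons hcross p₂), ?_⟩
    rw [Walk.length_append, Walk.length_cons, Walk.length_cons]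
    omega

lemma inflate_connected (hG : G.Connected) : (inflate G enc).Connected := by
  obtain ⟨v⟩ := hG.nonempty
  refine (connected_iff_exists_forall_reachable _).mpr ⟨(v, 7), fun ⟨u, a⟩ => ?_⟩
  obtain ⟨q⟩ := hG u v
  obtain ⟨p, -⟩ := exists_walk_inflate (enc := enc) q a (b := 7) (by simp [ports])
  exact p.reachable.symm

lemma dist_inflate_le (hG : G.Connected) (u w : V) (a : Fin 9) {b : Fin 9} (hb : b ∈ ports) :
    (inflate G enc).dist (u, a) (w, b) ≤ 4 * G.dist u w + 3 := by
  obtain ⟨q, hq⟩ := (hG u w).exists_walk_length_eq_dist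
  obtain ⟨p, hp⟩ := exists_walk_inflate (enc := enc) q a hb
  exact (dist_le p).trans (hq ▸ hp)

end InflateWalk

section Potential

variable {V : Type*} {G : SimpleGraph V} {enc : V → ℕ} {w : V}

open Classical in
variable (G enc w) in
/-- The ports through which shortest routes leave the copy of `P` at `u` towards the copy at
`w`; inside the copy at `w` the target is the 2-valent vertex `7`. -/
def towardPorts (u : V) : Set (Fin 9) :=
  if u = w then {7} else port G enc u '' {y | G.Adj u y ∧ G.dist y w < G.dist u w}

variable (G enc w) in
/-- A lower bound for the distance to `(w, 7)` in `inflate G enc`: each step towards `w` in `G`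
costs three edges inside a copy of `P` and one between copies. -/
noncomputable def potential (p : V × Fin 9) : ℕ :=
  4 * G.dist p.1 w + Pgr.infDist p.2 (towardPorts G enc w p.1)

lemma towardPorts_nonempty (hG : G.Connected) (u : V) : (towardPorts G enc w u).Nonempty := by
  unfold towardPorts
  split_ifs with hu
  · exact Set.singleton_nonempty 7
  · obtain ⟨y, hy⟩ := (hG u w).exists_adj_dist_lt hu
    exact ⟨_, y, hy, rfl⟩

lemma towardPorts_subset_ports (u : V) : towardPorts G enc w u ⊆ ports := by
  unfold towardPorts
  split_ifs
  · simp [ports]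
  · rintro _ ⟨y, -, rfl⟩
    exact port_mem_ports u y

lemma infDist_towardPorts_le_three (hG : G.Connected) (u : V) (a : Fin 9) :
    Pgr.infDist a (towardPorts G enc w u) ≤ 3 := by
  obtain ⟨b, hb⟩ := towardPorts_nonempty (enc := enc) hG u
  exact (infDist_le hb).trans (pgr_dist_le_three a (towardPorts_subset_ports u hb))

lemma infDist_towardPorts_port_eq_zero {u v : V} (hadj : G.Adj u v)
    (h : G.dist v w < G.dist u w) : Pgr.infDist (port G enc u v) (towardPorts G enc w u) = 0 := by
  have hu : u ≠ w := by rintro rfl; simp at h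
  have hmem : port G enc u v ∈ towardPorts G enc w u := by
    rw [towardPorts, if_neg hu]
    exact ⟨v, ⟨hadj, h⟩, rfl⟩
  exact Nat.le_zero.mp ((infDist_le hmem).trans dist_self.le)

variable (hinj : Function.Injective enc) (hdegs : ∀ x, hdeg G x = 2 ∨ hdeg G x = 3)
  (hw : hdeg G w = 2)
include hinj hdegs hw

lemma port_notMem_towardPorts {u v : V} (hadj : G.Adj u v) (h : G.dist u w ≤ G.dist v w) :
    port G enc u v ∉ towardPorts G enc w u := by
  unfold towardPorts
  split_ifs with hu
  · subst hu
    exact ((mem_port_image_iff (hdegs u) hinj).mp ⟨v, hadj, rfl⟩).2 hw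
  · rintro ⟨y, ⟨hy, hlt⟩, hyv⟩
    obtain rfl := port_injOn (hdegs u) hinj hy hadj hyv
    omega

lemma infDist_towardPorts_port_eq_three (hG : G.Connected) {u v : V} (hadj : G.Adj u v)
    (h : G.dist u w ≤ G.dist v w) : Pgr.infDist (port G enc u v) (towardPorts G enc w u) = 3 :=
  pgr_infDist_eq_three (towardPorts_subset_ports u) (towardPorts_nonempty hG u)
    (port_mem_ports u v) (port_notMem_towardPorts hinj hdegs hw hadj h)

lemma potential_le_add_one_of_adj (hG : G.Connected) {p q : V × Fin 9}
    (h : (inflate G enc).Adj p q) : potential G enc w p ≤ potential G enc w q + 1 := by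
  obtain ⟨u, a⟩ := p
  obtain ⟨v, b⟩ := q
  simp only [potential]
  rcases (show (u = v ∧ Pgr.Adj a b) ∨ (G.Adj u v ∧ a = port G enc u v ∧ b = port G enc v u)
    from h) with ⟨rfl, hab⟩ | ⟨huv, rfl, rfl⟩
  · have := hab.infDist_le_infDist_add_one (towardPorts_nonempty (enc := enc) (w := w) hG u)
    omega
  · have huv' := huv.dist_le_dist_add_one w
    have hu := infDist_towardPorts_le_three (enc := enc) (w := w) hG u (port G enc u v)
    rcases le_or_gt (G.dist v w) (G.dist u w) with hle | hlt
    · have := infDist_towardPorts_port_eq_three hinj hdegs hw hG huv.symm hle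
      rcases hle.lt_or_eq with hlt | heq
      · have := infDist_towardPorts_port_eq_zero (enc := enc) huv hlt
        omega
      · omega
    · omega

lemma potential_le_dist (hG : G.Connected) (p : V × Fin 9) :
    potential G enc w p ≤ (inflate G enc).dist p (w, 7) := by
  have h₀ : potential G enc w (w, 7) = 0 := by
    have := infDist_le (G := Pgr) (v := 7) (Set.mem_singleton (7 : Fin 9))
    simpa [potential, towardPorts] using this
  have := ((inflate_connected hG) p (w, 7)).le_add_dist
    fun _ _ => potential_le_add_one_of_adj hinj hdegs hw hG
  omega

end Potential

section LowerBound

variable {V : Type*} {G : SimpleGraph V} {enc : V → ℕ} {w : V}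
  (hG : G.Connected) (hinj : Function.Injective enc) (hdegs : ∀ x, hdeg G x = 2 ∨ hdeg G x = 3)
  (hw : hdeg G w = 2)
include hG hinj hdegs hw

lemma four_mul_dist_le_dist_inflate (u : V) (a : Fin 9) :
    4 * G.dist u w ≤ (inflate G enc).dist (u, a) (w, 7) :=
  (Nat.le_add_right _ _).trans (potential_le_dist hinj hdegs hw hG (u, a))

lemma le_dist_inflate_port {u y : V} (hadj : G.Adj u y) {d : ℕ} (hd : d ≤ G.dist u w)
    (htight : G.dist u w = d → d ≤ G.dist y w) :
    4 * d + 3 ≤ (inflate G enc).dist (u, port G enc u y) (w, 7) := by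
  rcases hd.lt_or_eq with hlt | rfl
  · have := four_mul_dist_le_dist_inflate hG hinj hdegs hw u (port G enc u y)
    omega
  · have := potential_le_dist hinj hdegs hw hG (u, port G enc u y)
    rwa [potential, infDist_towardPorts_port_eq_three hinj hdegs hw hG hadj (htight rfl)] at this

end LowerBound

structure InflationInvariant {V : Type*} (G : SimpleGraph V) (enc : V → ℕ) (d : ℕ) :
    Prop where
  injective : Function.Injective enc
  connected : G.Connected
  hdeg_two_or_three : ∀ v, hdeg G v = 2 ∨ hdeg G v = 3
  exists_near : ∀ v, ∃ w, hdeg G w = 2 ∧ G.dist v w ≤ d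
  exists_far : ∃ u y, G.Adj u y ∧ ∀ w, hdeg G w = 2 →
    d ≤ G.dist u w ∧ (G.dist u w = d → d ≤ G.dist y w)

theorem InflationInvariant.inflate {V : Type*} {G : SimpleGraph V} {enc : V → ℕ} {d : ℕ}
    (h : InflationInvariant G enc d) :
    InflationInvariant (inflate G enc) (fun p => Nat.pair (enc p.1) p.2.val) (4 * d + 3) := by
  obtain ⟨hinj, hG, hdegs, hnear, u, y, hadj, hfar⟩ := h
  have hdeg_eq := fun (v : V) a => hdeg_inflate (enc := enc) hinj (hdegs v) a
  refine ⟨?_, inflate_connected hG, fun ⟨v, a⟩ => ?_, fun ⟨v, a⟩ => ?_, (u, port G enc u y),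
    (y, port G enc y u), Or.inr ⟨hadj, rfl, rfl⟩, fun ⟨w, c⟩ hwc => ?_⟩
  · rintro ⟨v, a⟩ ⟨v', a'⟩ h
    obtain ⟨h₁, h₂⟩ := Nat.pair_eq_pair.mp h
    exact Prod.ext (hinj h₁) (Fin.val_injective h₂)
  · rw [hdeg_eq]
    split_ifs <;> simp
  · obtain ⟨w, hw, hvw⟩ := hnear v
    refine ⟨(w, 7), by simp [hdeg_eq, hw], ?_⟩
    have := dist_inflate_le (enc := enc) hG v w a (b := 7) (by simp [ports])
    omega
  · obtain ⟨hw, rfl⟩ : hdeg G w = 2 ∧ c = 7 := by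
      by_contra hne
      simp [hdeg_eq, hne] at hwc
    obtain ⟨hd, htight⟩ := hfar w hw
    refine ⟨le_dist_inflate_port hG hinj hdegs hw hadj hd htight, fun heq => ?_⟩
    have := four_mul_dist_le_dist_inflate hG hinj hdegs hw u (port G enc u y)
    have hyw := htight (by omega)
    exact le_dist_inflate_port hG hinj hdegs hw hadj.symm hyw fun _ => by omega

lemma inflationInvariant_pgr : InflationInvariant Pgr Fin.val 1 := by
  have hports : ∀ a, hdeg Pgr a = 2 ↔ a ∈ ports := fun a => by
    rw [hdeg_pgr]; split_ifs with h <;> simp [h]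
  refine ⟨Fin.val_injective, pgr_connected, fun a => ?_, fun a => ?_,
    ⟨0, 1, by decide, fun w hw => ?_⟩⟩
  · rw [hdeg_pgr]; split_ifs <;> simp
  · obtain ⟨b, hb, hab⟩ := exists_port_pgr_dist_le_one a
    exact ⟨b, (hports b).mpr hb, hab⟩
  · have hw : w ∈ ports := (hports w).mp hw
    have h0 : (0 : Fin 9) ≠ w := by rintro rfl; simp [ports] at hw
    have h1 : (1 : Fin 9) ≠ w := by rintro rfl; simp [ports] at hw
    exact ⟨pgr_connected.pos_dist_of_ne h0, fun _ => pgr_connected.pos_dist_of_ne h1⟩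

lemma inflationInvariant_itP (k : ℕ) :
    InflationInvariant (ItP k).G (ItP k).enc (2 ^ (2 * k + 1) - 1) := by
  induction k with
  | zero => exact inflationInvariant_pgr
  | succ k ih =>
    have h : 2 ^ (2 * (k + 1) + 1) - 1 = 4 * (2 ^ (2 * k + 1) - 1) + 3 := by
      have := Nat.one_le_two_pow (n := 2 * k + 1)
      rw [show 2 * (k + 1) + 1 = 2 * k + 1 + 2 by ring, pow_add]
      omega
    rw [h]
    exact ih.inflate

/-- `d_k = 2^{2k+1} - 1`, where `d_k` is the maximal distance in `Pᵏ`
from a vertex to the set `W_k` of the three 2-valent vertices of `Pᵏ`. -/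
theorem stmt_5 (k : ℕ) :
    sSup (Set.range fun v : (ItP k).V =>
      sInf ((fun w => (ItP k).G.dist v w) '' {w | hdeg (ItP k).G w = 2})) =
    2 ^ (2 * k + 1) - 1 := by
  obtain ⟨-, -, -, hnear, u, _, -, hfar⟩ := inflationInvariant_itP k
  exact sSup_range_infDist_eq (fun v => (hnear v).imp fun _ => id)
    ⟨u, fun w hw => (hfar w hw).1⟩
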